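/- arXiv:1212.3753 — 6 statements merged into one kernel-verified Lean document; each statement's English description precedes it below -/
import Mathlib

section
/- For any norm ‖·‖ on ℝ^n with Lipschitz constant L (with respect to the Euclidean norm) and any nonzero x ∈ ℝ^n, every subgradient g of ‖·‖ at x satisfies ⟨x, g⟩ / (‖x‖₂ ‖g‖₂) ≥ ‖x/‖x‖₂‖ / L. -/
open scoped RealInnerProductSpace

/-- For any norm `N` on ℝⁿ with Euclidean Lipschitz constant `L` and any
nonzero `x`, every subgradient `g` of `N` at `x` satisfies
`⟨x, g⟩ / (‖x‖₂ ‖g‖₂) ≥ N(x/‖x‖₂) / L`. -/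
theorem subgradient_correlation_lower_bound {n : ℕ}
    (N : EuclideanSpace ℝ (Fin n) → ℝ) (L : ℝ) (hL : 0 < L)
    (hN_add : ∀ x y, N (x + y) ≤ N x + N y)
    (hN_smul : ∀ (a : ℝ) (x : EuclideanSpace ℝ (Fin n)), N (a • x) = |a| * N x)
    (hN_pos : ∀ x, x ≠ 0 → 0 < N x)
    (hLip : ∀ (z₁ z₂ : EuclideanSpace ℝ (Fin n)), N z₁ - N z₂ ≤ L * ‖z₁ - z₂‖)
    (x g : EuclideanSpace ℝ (Fin n)) (hx : x ≠ 0)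
    (hg : ∀ z, N x + ⟪g, z - x⟫ ≤ N z) :
    N (‖x‖⁻¹ • x) / L ≤ ⟪x, g⟫ / (‖x‖ * ‖g‖) := by
  have hxpos : (0:ℝ) < ‖x‖ := norm_pos_iff.mpr hx
  have hNx : 0 < N x := hN_pos x hx
  -- ⟪g, x⟫ = N x
  have h2 := hg (((2:ℝ) • x))
  have h0 := hg 0
  have hN2 : N (((2:ℝ) • x)) = 2 * N x := by
    have := hN_smul 2 x
    simpa using this
  have hN0 : N (0 : EuclideanSpace ℝ (Fin n)) = 0 := by
    have := hN_smul 0 x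
    simpa using this
  have hgx_le : ⟪g, x⟫ ≤ N x := by
    have : N x + ⟪g, ((2:ℝ) • x) - x⟫ ≤ 2 * N x := by rw [← hN2]; exact h2
    have hxx : ((2:ℝ)) • x - x = x := by
      rw [two_smul]; abel
    rw [hxx] at this; linarith
  have hgx_ge : N x ≤ ⟪g, x⟫ := by
    have : N x + ⟪g, 0 - x⟫ ≤ 0 := by rw [← hN0]; exact h0
    rw [zero_sub, inner_neg_right] at this; linarith
  have hgx : ⟪g, x⟫ = N x := le_antisymm hgx_le hgx_ge
  -- ‖g‖ ≤ L
  have hgL : ‖g‖ ≤ L := by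
    have h := hg (x + g)
    have := hLip (x + g) x
    have hs : (x + g) - x = g := by abel
    rw [hs] at h this
    have hgg : ⟪g, g⟫ ≤ L * ‖g‖ := by
      have : ⟪g, g⟫ ≤ N (x + g) - N x := by linarith
      linarith
    rw [real_inner_self_eq_norm_sq] at hgg
    nlinarith [norm_nonneg g]
  have hg0 : (0:ℝ) < ‖g‖ := by
    rcases eq_or_lt_of_le (norm_nonneg g) with h | h
    · exfalso
      have : g = 0 := by simpa using h.symm
      rw [this] at hgx
      simp at hgx
      linarith
    · exact h
  have hxg : ⟪x, g⟫ = N x := by rw [real_inner_comm]; exact hgx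
  have hNu : N (‖x‖⁻¹ • x) = ‖x‖⁻¹ * N x := by
    rw [hN_smul]; rw [abs_of_pos (by positivity)]
  rw [hNu, hxg]
  rw [div_le_div_iff₀ hL (by positivity)]
  have : ‖x‖⁻¹ * ‖x‖ = 1 := inv_mul_cancel₀ hxpos.ne'
  calc ‖x‖⁻¹ * N x * (‖x‖ * ‖g‖) = N x * ‖g‖ := by
        field_simp
    _ ≤ N x * L := by nlinarith
end

section
/- Let f(x) = Σ_{i=1}^τ λᵢ ‖x‖_(i) be a nonnegative weighted sum of norms on ℝ^n, where norm ‖·‖_(i) has Euclidean Lipschitz constant Lᵢ, and let x₀ ≠ 0. Then for every subgradient g ∈ ∂f(x₀), ⟨x₀, g⟩/(‖x₀‖₂‖g‖₂) ≥ Σ_{i=1}^τ λ̄ᵢ κᵢ, where λ̄ᵢ = λᵢLᵢ / Σ_j λ_j L_j and κᵢ = ‖x₀/‖x₀‖₂‖_(i) / Lᵢ. -/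
open scoped RealInnerProductSpace

/-- For a nonnegative weighted sum `f = Σ λᵢ ‖·‖_(i)` of norms with Euclidean
Lipschitz constants `Lᵢ`, every subgradient `g` of `f` at `x₀ ≠ 0` satisfies
`⟨x₀, g⟩/(‖x₀‖‖g‖) ≥ Σᵢ λ̄ᵢ κᵢ` with `λ̄ᵢ = λᵢLᵢ/Σⱼ λⱼLⱼ` and `κᵢ = ‖x̄₀‖_(i)/Lᵢ`. -/
theorem weighted_sum_subgradient_correlation {n τ : ℕ}
    (N : Fin τ → EuclideanSpace ℝ (Fin n) → ℝ) (L lam : Fin τ → ℝ)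
    (hL : ∀ i, 0 < L i) (hlam : ∀ i, 0 ≤ lam i)
    (hsum : 0 < ∑ j, lam j * L j)
    (hN_add : ∀ i, ∀ (x y : EuclideanSpace ℝ (Fin n)), N i (x + y) ≤ N i x + N i y)
    (hN_smul : ∀ i, ∀ (a : ℝ) (x : EuclideanSpace ℝ (Fin n)), N i (a • x) = |a| * N i x)
    (hN_pos : ∀ i, ∀ x, x ≠ 0 → 0 < N i x)
    (hLip : ∀ i, ∀ (z₁ z₂ : EuclideanSpace ℝ (Fin n)), N i z₁ - N i z₂ ≤ L i * ‖z₁ - z₂‖)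
    (x₀ g : EuclideanSpace ℝ (Fin n)) (hx₀ : x₀ ≠ 0)
    (hg : ∀ z, (∑ i, lam i * N i x₀) + ⟪g, z - x₀⟫ ≤ ∑ i, lam i * N i z) :
    (∑ i, (lam i * L i / ∑ j, lam j * L j) * (N i (‖x₀‖⁻¹ • x₀) / L i))
      ≤ ⟪x₀, g⟫ / (‖x₀‖ * ‖g‖) := by
  set S : ℝ := ∑ j, lam j * L j with hS
  set F : ℝ := ∑ i, lam i * N i x₀ with hF
  have hx₀n : (0:ℝ) < ‖x₀‖ := norm_pos_iff.mpr hx₀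
  have hN0 : ∀ i, N i 0 = 0 := by
    intro i
    have := hN_smul i 0 0
    simpa using this
  -- F > 0
  have hFpos : 0 < F := by
    obtain ⟨i, _, hi⟩ : ∃ i ∈ Finset.univ, 0 < lam i * L i := by
      by_contra h
      push_neg at h
      have : S ≤ 0 := Finset.sum_nonpos (fun j hj => h j hj)
      linarith
    have hlami : 0 < lam i := by
      rcases lt_or_ge 0 (lam i) with h | h
      · exact h
      · exfalso; nlinarith [hL i]
    have hterm : 0 < lam i * N i x₀ := mul_pos hlami (hN_pos i x₀ hx₀)
    have hle : lam i * N i x₀ ≤ F :=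
      Finset.single_le_sum (fun j _ => mul_nonneg (hlam j) (hN_pos j x₀ hx₀).le)
        (Finset.mem_univ i)
    linarith
  -- ⟪x₀, g⟫ = F
  have h0 := hg 0
  have h2 := hg ((2:ℝ) • x₀)
  simp only [hN0, mul_zero, Finset.sum_const_zero] at h0
  have e2 : ∀ i, N i ((2:ℝ) • x₀) = 2 * N i x₀ := by
    intro i; rw [hN_smul]; norm_num
  simp only [e2] at h2
  have hinner0 : ⟪g, (0:EuclideanSpace ℝ (Fin n)) - x₀⟫ = -⟪g, x₀⟫ := by
    rw [zero_sub, inner_neg_right]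
  have hinner2 : ⟪g, (2:ℝ) • x₀ - x₀⟫ = ⟪g, x₀⟫ := by
    have : (2:ℝ) • x₀ - x₀ = x₀ := by
      rw [two_smul]; abel
    rw [this]
  rw [hinner0] at h0
  rw [hinner2] at h2
  have hsum2 : ∑ i, lam i * (2 * N i x₀) = 2 * F := by
    rw [hF, Finset.mul_sum]; congr 1; funext i; ring
  rw [hsum2] at h2
  have hgx : ⟪g, x₀⟫ = F := by linarith
  have hx0g : ⟪x₀, g⟫ = F := by rw [real_inner_comm]; exact hgx
  -- ‖g‖ ≤ S
  have hgS : ‖g‖ ≤ S := by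
    have hgg := hg (x₀ + g)
    have hcancel : x₀ + g - x₀ = g := by abel
    rw [hcancel, real_inner_self_eq_norm_sq] at hgg
    have hub : ∑ i, lam i * N i (x₀ + g) ≤ F + S * ‖g‖ := by
      have : ∀ i, lam i * N i (x₀ + g) ≤ lam i * N i x₀ + lam i * L i * ‖g‖ := by
        intro i
        have h1 : N i (x₀ + g) - N i x₀ ≤ L i * ‖g‖ := by
          have := hLip i (x₀ + g) x₀
          rwa [hcancel] at this
        nlinarith [hlam i]
      calc ∑ i, lam i * N i (x₀ + g) ≤ ∑ i, (lam i * N i x₀ + lam i * L i * ‖g‖) :=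
            Finset.sum_le_sum (fun i _ => this i)
        _ = F + S * ‖g‖ := by
            rw [Finset.sum_add_distrib, hF, hS, Finset.sum_mul]
      
    have hsq : ‖g‖ ^ 2 ≤ S * ‖g‖ := by linarith
    rcases eq_or_ne g 0 with rfl | hg0
    · simpa using hsum.le
    · have : (0:ℝ) < ‖g‖ := norm_pos_iff.mpr hg0
      nlinarith
  have hgpos : (0:ℝ) < ‖g‖ := by
    rcases eq_or_ne g 0 with rfl | hg0
    · exfalso
      rw [inner_zero_right] at hx0g
      linarith
    · exact norm_pos_iff.mpr hg0
  -- simplify LHS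
  have hLHS : (∑ i, (lam i * L i / S) * (N i (‖x₀‖⁻¹ • x₀) / L i)) = F / (‖x₀‖ * S) := by
    have : ∀ i, (lam i * L i / S) * (N i (‖x₀‖⁻¹ • x₀) / L i)
        = lam i * N i x₀ / (‖x₀‖ * S) := by
      intro i
      rw [hN_smul i (‖x₀‖⁻¹) x₀, abs_of_pos (inv_pos.mpr hx₀n)]
      field_simp [(hL i).ne', hx₀n.ne', hsum.ne']
    rw [Finset.sum_congr rfl (fun i _ => this i), ← Finset.sum_div, ← hF]
  rw [hLHS, hx0g]
  apply div_le_div_of_nonneg_left hFpos.le (by positivity)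
  exact mul_le_mul_of_nonneg_left hgS hx₀n.le
end

section
/- Let A ∈ ℝ^{m×n}, x₀ ∈ ℝ^n nonzero, and f : ℝ^n → ℝ convex. If every subgradient g ∈ ∂f(x₀) satisfies |⟨g/‖g‖₂, x₀/‖x₀‖₂⟩| > ‖A(x₀/‖x₀‖₂)‖₂ / σ_min(Aᵀ) (with σ_min(Aᵀ) > 0 the smallest singular value of Aᵀ), then x₀ is not a minimizer of f over the affine set {x : Ax = Ax₀}, i.e., there exists x' with Ax' = Ax₀ and f(x') < f(x₀). -/
open Matrix
open scoped RealInnerProductSpace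

/-!
Suppose `x₀` minimized `f` on `x₀ + ker A`. Separating the open strict epigraph of `f` from the
affine set `(x₀ + ker A) × {f x₀}` by a hyperplane yields a subgradient `g` of `f` at `x₀` that
is orthogonal to `ker A`, i.e. `g = Aᵀ z` for some `z` (a Lagrange multiplier). Then
`|⟪g, x₀⟫| = |⟪z, A x₀⟫| ≤ ‖z‖ ‖A x₀‖ ≤ ‖g‖ ‖A x₀‖ / σ_min(Aᵀ)`, contradicting the hypothesis
on `g`.
-/

open Set Pointwise in
theorem ConvexOn.exists_subgradient_vanishing_on_of_forall_le_add
    {E : Type*} [TopologicalSpace E] [AddCommGroup E] [Module ℝ E] [IsTopologicalAddGroup E]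
    [ContinuousSMul ℝ E] {f : E → ℝ} (hf : ConvexOn ℝ univ f) (hfc : Continuous f)
    (K : Submodule ℝ E) {x₀ : E} (hmin : ∀ k ∈ K, f x₀ ≤ f (x₀ + k)) :
    ∃ φ : StrongDual ℝ E, (∀ k ∈ K, φ k = 0) ∧ ∀ z, f x₀ + φ (z - x₀) ≤ f z := by
  set C : Set (E × ℝ) := {p | f p.1 < p.2}
  set D : Set (E × ℝ) := (x₀, f x₀) +ᵥ (K.prod (⊥ : Submodule ℝ ℝ) : Set (E × ℝ))
  have hC : Convex ℝ C := by simpa using hf.convex_strict_epigraph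
  have hCopen : IsOpen C := isOpen_lt (hfc.comp continuous_fst) continuous_snd
  have hD : Convex ℝ D := (K.prod ⊥).convex.vadd _
  have hmemD : ∀ k ∈ K, (x₀ + k, f x₀) ∈ D := fun k hk =>
    mem_vadd_set.mpr ⟨(k, 0), ⟨hk, rfl⟩, by simp [vadd_eq_add]⟩
  have hdisj : Disjoint C D := by
    refine disjoint_left.mpr fun p hpC hpD => ?_
    obtain ⟨⟨k, _⟩, ⟨hk, rfl : _ = (0 : ℝ)⟩, rfl⟩ := mem_vadd_set.mp hpD
    exact (hmin k hk).not_gt (by simpa [C, vadd_eq_add] using hpC)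
  obtain ⟨ℓ, u, hCu, hDu⟩ := geometric_hahn_banach_open hC hCopen hD hdisj
  set L : StrongDual ℝ E := ℓ.comp (.inl ℝ E ℝ)
  set α : ℝ := ℓ (0, 1)
  have hℓ : ∀ x t, ℓ (x, t) = L x + t * α := fun x t => by
    rw [show (x, t) = (x, 0) + t • ((0 : E), (1 : ℝ)) by simp, map_add, map_smul]
    simp [L, α]
  have hbelow : ∀ z t, f z < t → L z + t * α < u := fun z t h => hℓ z t ▸ hCu (z, t) h
  have habove : ∀ k ∈ K, u ≤ L x₀ + L k + f x₀ * α := fun k hk => by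
    simpa [hℓ] using hDu _ (hmemD k hk)
  have hx₀ : u ≤ L x₀ + f x₀ * α := by simpa using habove 0 K.zero_mem
  have hα : α < 0 := by linarith [hbelow x₀ (f x₀ + 1) (by linarith)]
  -- `L` is bounded below on the subspace `K`, hence vanishes there.
  have hLK : ∀ k ∈ K, L k = 0 := by
    intro k hk
    by_contra hLk
    have h₁ := habove ((α / L k) • k) (K.smul_mem _ hk)
    rw [map_smul, smul_eq_mul, div_mul_cancel₀ _ hLk] at h₁
    linarith [hbelow x₀ (f x₀ + 1) (by linarith)]
  refine ⟨(-α)⁻¹ • L, fun k hk => by simp [hLK k hk], fun z => le_of_forall_gt fun t ht => ?_⟩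
  have h₁ : L (z - x₀) < (t - f x₀) * -α := by
    rw [map_sub]
    linarith [hbelow z t ht, hx₀]
  have h₂ : (-α)⁻¹ * L (z - x₀) < t - f x₀ := by
    rwa [inv_mul_lt_iff₀ (neg_pos.mpr hα), mul_comm]
  simp only [_root_.smul_apply, smul_eq_mul]
  linarith

theorem ConvexOn.exists_subgradient_mem_orthogonal_of_forall_le_add
    {E : Type*} [NormedAddCommGroup E] [InnerProductSpace ℝ E] [FiniteDimensional ℝ E]
    {f : E → ℝ} (hf : ConvexOn ℝ Set.univ f) (K : Submodule ℝ E) {x₀ : E}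
    (hmin : ∀ k ∈ K, f x₀ ≤ f (x₀ + k)) :
    ∃ g ∈ Kᗮ, ∀ z, f x₀ + ⟪g, z - x₀⟫ ≤ f z := by
  have hfc : Continuous f := continuousOn_univ.mp (hf.continuousOn isOpen_univ)
  obtain ⟨φ, hφK, hφ⟩ := hf.exists_subgradient_vanishing_on_of_forall_le_add hfc K hmin
  refine ⟨(InnerProductSpace.toDual ℝ E).symm φ, (K.mem_orthogonal' _).mpr fun k hk => ?_,
    fun z => ?_⟩
  · rw [InnerProductSpace.toDual_symm_apply, hφK k hk]
  · rw [InnerProductSpace.toDual_symm_apply]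
    exact hφ z

theorem LinearMap.iInf_norm_sphere_mul_norm_le {E F : Type*} [NormedAddCommGroup E]
    [NormedSpace ℝ E] [SeminormedAddCommGroup F] [NormedSpace ℝ F] (T : E →ₗ[ℝ] F) (z : E) :
    (⨅ w : Metric.sphere (0 : E) 1, ‖T w‖) * ‖z‖ ≤ ‖T z‖ := by
  rcases eq_or_ne z 0 with rfl | hz
  · simp
  have hbdd : BddBelow (Set.range fun w : Metric.sphere (0 : E) 1 => ‖T w‖) :=
    ⟨0, Set.forall_mem_range.mpr fun _ => norm_nonneg _⟩
  have hz' : (‖z‖⁻¹ • z) ∈ Metric.sphere (0 : E) 1 := by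
    simpa using norm_smul_inv_norm (𝕜 := ℝ) hz
  calc (⨅ w : Metric.sphere (0 : E) 1, ‖T w‖) * ‖z‖
      ≤ ‖T (‖z‖⁻¹ • z)‖ * ‖z‖ := by
        gcongr
        exact ciInf_le hbdd ⟨_, hz'⟩
    _ = ‖T z‖ := by
        rw [map_smul, norm_smul, norm_inv, norm_norm, mul_comm,
          mul_inv_cancel_left₀ (norm_ne_zero_iff.mpr hz)]

theorem LinearMap.abs_inner_normalize_adjoint_le {E F : Type*} [NormedAddCommGroup E]
    [InnerProductSpace ℝ E] [FiniteDimensional ℝ E] [NormedAddCommGroup F]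
    [InnerProductSpace ℝ F] [FiniteDimensional ℝ F] (T : E →ₗ[ℝ] F) {σ : ℝ} (hσ : 0 < σ)
    (hT : ∀ w, σ * ‖w‖ ≤ ‖T.adjoint w‖) (w : F) (x : E) :
    |⟪‖T.adjoint w‖⁻¹ • T.adjoint w, x⟫| ≤ ‖T x‖ / σ := by
  set g := T.adjoint w
  have hw : ‖w‖ ≤ ‖g‖ / σ := by rw [le_div_iff₀ hσ, mul_comm]; exact hT w
  calc |⟪‖g‖⁻¹ • g, x⟫| = ‖g‖⁻¹ * |⟪w, T x⟫| := by
        rw [real_inner_smul_left, LinearMap.adjoint_inner_left, abs_mul, abs_inv, abs_norm]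
    _ ≤ ‖g‖⁻¹ * (‖g‖ / σ * ‖T x‖) := by
        gcongr
        exact (abs_real_inner_le_norm w (T x)).trans (by gcongr)
    _ = (‖g‖⁻¹ * ‖g‖) * (‖T x‖ / σ) := by ring
    _ ≤ ‖T x‖ / σ := by
        apply mul_le_of_le_one_left (by positivity)
        exact inv_mul_le_one_of_le₀ le_rfl (norm_nonneg g)

theorem Matrix.toEuclideanLin_transpose_eq_adjoint {m n : Type*} [Fintype m] [DecidableEq m]
    [Fintype n] [DecidableEq n] (A : Matrix m n ℝ) :
    toEuclideanLin Aᵀ = (toEuclideanLin A).adjoint := by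
  rw [← toEuclideanLin_conjTranspose_eq_adjoint, conjTranspose_eq_transpose_of_trivial]

theorem deterministic_failure_general {m n : ℕ}
    (A : Matrix (Fin m) (Fin n) ℝ)
    (x₀ : EuclideanSpace ℝ (Fin n))
    (f : EuclideanSpace ℝ (Fin n) → ℝ) (hf : ConvexOn ℝ Set.univ f)
    (σmin : ℝ)
    (hσdef : σmin = ⨅ z : Metric.sphere (0 : EuclideanSpace ℝ (Fin m)) 1,
      ‖Matrix.toEuclideanLin Aᵀ (z : EuclideanSpace ℝ (Fin m))‖)
    (hσpos : 0 < σmin)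
    (hcorr : ∀ g : EuclideanSpace ℝ (Fin n), (∀ z, f x₀ + ⟪g, z - x₀⟫ ≤ f z) →
      ‖Matrix.toEuclideanLin A (‖x₀‖⁻¹ • x₀)‖ / σmin < |⟪‖g‖⁻¹ • g, ‖x₀‖⁻¹ • x₀⟫|) :
    ∃ x' : EuclideanSpace ℝ (Fin n),
      Matrix.toEuclideanLin A x' = Matrix.toEuclideanLin A x₀ ∧ f x' < f x₀ := by
  set T := toEuclideanLin A
  rw [toEuclideanLin_transpose_eq_adjoint] at hσdef
  by_contra! hmin
  obtain ⟨g, hgK, hg⟩ := hf.exists_subgradient_mem_orthogonal_of_forall_le_add (LinearMap.ker T)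
    fun k hk => hmin _ (by rw [map_add, LinearMap.mem_ker.mp hk, add_zero])
  obtain ⟨w, rfl⟩ : g ∈ LinearMap.range T.adjoint := T.orthogonal_ker ▸ hgK
  have hσ : ∀ w, σmin * ‖w‖ ≤ ‖T.adjoint w‖ := hσdef ▸ T.adjoint.iInf_norm_sphere_mul_norm_le
  exact (hcorr _ hg).not_ge (T.abs_inner_normalize_adjoint_le hσpos hσ w _)

/-- If every subgradient `g ∈ ∂f(x₀)` satisfies
`|⟨g/‖g‖, x₀/‖x₀‖⟩| > ‖A x̄₀‖/σ_min(Aᵀ)` where `σ_min(Aᵀ) > 0` is the smallest singular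
value of `Aᵀ` (the infimum of `‖Aᵀz‖` over unit vectors `z`), then `x₀` does not minimize
the convex function `f` over `{x : Ax = Ax₀}`. -/
theorem deterministic_failure {m n : ℕ}
    (A : Matrix (Fin m) (Fin n) ℝ)
    (x₀ : EuclideanSpace ℝ (Fin n)) (hx₀ : x₀ ≠ 0)
    (f : EuclideanSpace ℝ (Fin n) → ℝ) (hf : ConvexOn ℝ Set.univ f)
    (σmin : ℝ)
    (hσdef : σmin = ⨅ z : Metric.sphere (0 : EuclideanSpace ℝ (Fin m)) 1,
      ‖Matrix.toEuclideanLin Aᵀ (z : EuclideanSpace ℝ (Fin m))‖)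
    (hσpos : 0 < σmin)
    (hsub_ne : {g : EuclideanSpace ℝ (Fin n) | ∀ z, f x₀ + ⟪g, z - x₀⟫ ≤ f z}.Nonempty)
    (hsub_zero : ¬ (∀ z, f x₀ + ⟪(0 : EuclideanSpace ℝ (Fin n)), z - x₀⟫ ≤ f z))
    (hcorr : ∀ g : EuclideanSpace ℝ (Fin n), (∀ z, f x₀ + ⟪g, z - x₀⟫ ≤ f z) →
      ‖Matrix.toEuclideanLin A (‖x₀‖⁻¹ • x₀)‖ / σmin < |⟪‖g‖⁻¹ • g, ‖x₀‖⁻¹ • x₀⟫|) :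
    ∃ x' : EuclideanSpace ℝ (Fin n),
      Matrix.toEuclideanLin A x' = Matrix.toEuclideanLin A x₀ ∧ f x' < f x₀ :=
  deterministic_failure_general A x₀ f hf σmin hσdef hσpos hcorr
end

section
/- Let ‖·‖ be a norm on ℝ^n that is decomposable at x₀ with support subspace T and sign vector e ∈ T, meaning ∂‖x₀‖ = {z : P_T(z) = e, ‖P_{T⊥}(z)‖* ≤ 1}. Then for every unit vector v ∈ ℝ^n, inf_{g ∈ ∂‖x₀‖} |⟨v, g⟩|/‖g‖₂ ≤ inf_{g ∈ ∂‖x₀‖} |⟨e/‖e‖₂, g⟩|/‖g‖₂; i.e., the normalized sign vector maximizes the minimum absolute correlation with the subdifferential. -/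
open scoped RealInnerProductSpace

/-! Every `g ∈ S` splits as `e + w` with `w ∈ Tᗮ`, so the whole segment `e + t • w`, `|t| ≤ 1`,
lies in `S`, and the right-hand side at `g` is `‖e‖ / ‖g‖`. Along the segment the correlation
`⟪v, e⟫ + t * ⟪v, w⟫` either vanishes for some `t`, or, for `t = ±1` chosen against the sign of
`⟪v, e⟫ * ⟪v, w⟫`, is at most `|⟪v, e⟫| ≤ ‖e‖` in absolute value, while `‖e ± w‖ = ‖g‖`. -/

lemma exists_abs_le_one_add_mul_eq_zero_or_abs_le (a b : ℝ) :
    ∃ t : ℝ, |t| ≤ 1 ∧ (a + t * b = 0 ∨ |t| = 1 ∧ |a + t * b| ≤ |a|) := by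
  rcases le_or_gt |a| |b| with hab | hba
  · rcases eq_or_ne b 0 with rfl | hb
    · exact ⟨0, by simp, .inl (by simpa using hab)⟩
    · refine ⟨-a / b, ?_, .inl (by field_simp; ring)⟩
      rw [abs_div, abs_neg]
      exact div_le_one_of_le₀ hab (abs_nonneg b)
  · have hb2 : b ^ 2 ≤ |a * b| := by
      rw [abs_mul, ← sq_abs b, sq]
      exact mul_le_mul_of_nonneg_right hba.le (abs_nonneg b)
    rcases le_total 0 (a * b) with hab | hab
    · refine ⟨-1, by simp, .inr ⟨by simp, sq_le_sq.mp ?_⟩⟩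
      rw [abs_of_nonneg hab] at hb2
      nlinarith
    · refine ⟨1, by simp, .inr ⟨by simp, sq_le_sq.mp ?_⟩⟩
      rw [abs_of_nonpos hab] at hb2
      nlinarith

lemma apply_smul_le_one_of_abs_le_one {M : Type*} [AddCommGroup M] [Module ℝ M] {N : M → ℝ}
    (hN : ∀ (a : ℝ) (x : M), N (a • x) = |a| * N x) {x : M} (hx : N x ≤ 1) {t : ℝ}
    (ht : |t| ≤ 1) : N (t • x) ≤ 1 := by
  rw [hN]
  rcases le_total 0 (N x) with h | h
  · exact mul_le_one₀ ht h hx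
  · exact (mul_nonpos_of_nonneg_of_nonpos (abs_nonneg t) h).trans zero_le_one

section InnerProductSpace

variable {E : Type*} [SeminormedAddCommGroup E] [InnerProductSpace ℝ E]

lemma norm_add_smul_eq_norm_add_of_inner_eq_zero {e w : E} (hew : ⟪e, w⟫ = 0) {t : ℝ}
    (ht : |t| = 1) : ‖e + t • w‖ = ‖e + w‖ := by
  rcases (abs_eq zero_le_one).mp ht with rfl | rfl
  · rw [one_smul]
  · rw [neg_one_smul, ← sub_eq_add_neg]
    exact norm_sub_eq_norm_add (real_inner_comm e w ▸ hew)

lemma inner_norm_inv_smul_add_of_inner_eq_zero {e w : E} (hew : ⟪e, w⟫ = 0) :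
    ⟪‖e‖⁻¹ • e, e + w⟫ = ‖e‖ := by
  rw [real_inner_smul_left, inner_add_right, hew, add_zero, real_inner_self_eq_norm_sq]
  rcases eq_or_ne ‖e‖ 0 with he | he
  · simp [he]
  · field_simp

lemma exists_abs_inner_add_smul_div_norm_le {v e w : E} (hv : ‖v‖ ≤ 1) (hew : ⟪e, w⟫ = 0) :
    ∃ t : ℝ, |t| ≤ 1 ∧ |⟪v, e + t • w⟫| / ‖e + t • w‖ ≤ ‖e‖ / ‖e + w‖ := by
  obtain ⟨t, ht, hcancel | ⟨ht1, hle⟩⟩ :=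
    exists_abs_le_one_add_mul_eq_zero_or_abs_le ⟪v, e⟫ ⟪v, w⟫
  all_goals refine ⟨t, ht, ?_⟩; rw [inner_add_right, real_inner_smul_right]
  · rw [hcancel, abs_zero, zero_div]
    positivity
  · rw [norm_add_smul_eq_norm_add_of_inner_eq_zero hew ht1]
    gcongr
    calc |⟪v, e⟫ + t * ⟪v, w⟫| ≤ |⟪v, e⟫| := hle
      _ ≤ ‖v‖ * ‖e‖ := abs_real_inner_le_norm v e
      _ ≤ ‖e‖ := mul_le_of_le_one_left (norm_nonneg e) hv

end InnerProductSpace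

namespace Submodule

variable {E : Type*} [NormedAddCommGroup E] [InnerProductSpace ℝ E] {K : Submodule ℝ E}
  [K.HasOrthogonalProjection]

lemma starProjection_eq_iff_sub_mem_orthogonal {u v : E} (hv : v ∈ K) :
    K.starProjection u = v ↔ u - v ∈ Kᗮ :=
  ⟨fun h ↦ h ▸ K.sub_starProjection_mem_orthogonal u, K.eq_starProjection_of_mem_orthogonal hv⟩

lemma starProjection_eq_and_iff_sub_mem_orthogonal_and {p : E → Prop} {u v : E} (hv : v ∈ K) :
    K.starProjection u = v ∧ p (u - K.starProjection u) ↔ u - v ∈ Kᗮ ∧ p (u - v) := by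
  rw [K.starProjection_eq_iff_sub_mem_orthogonal hv, and_congr_right_iff]
  intro huv
  rw [K.eq_starProjection_of_mem_orthogonal hv huv]

end Submodule

theorem sign_vector_maximizes_correlation_general {n : ℕ}
    (T : Submodule ℝ (EuclideanSpace ℝ (Fin n)))
    (Nd : EuclideanSpace ℝ (Fin n) → ℝ)
    (hNd_smul : ∀ (a : ℝ) (x : EuclideanSpace ℝ (Fin n)), Nd (a • x) = |a| * Nd x)
    (e : EuclideanSpace ℝ (Fin n)) (heT : e ∈ T)
    (S : Set (EuclideanSpace ℝ (Fin n)))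
    (hS : S = {z | (T.orthogonalProjection z : EuclideanSpace ℝ (Fin n)) = e ∧
      Nd (z - (T.orthogonalProjection z : EuclideanSpace ℝ (Fin n))) ≤ 1})
    (hSne : S.Nonempty)
    (v : EuclideanSpace ℝ (Fin n)) (hv : ‖v‖ = 1) :
    (⨅ g : S, |⟪v, (g : EuclideanSpace ℝ (Fin n))⟫| / ‖(g : EuclideanSpace ℝ (Fin n))‖)
      ≤ ⨅ g : S, |⟪‖e‖⁻¹ • e, (g : EuclideanSpace ℝ (Fin n))⟫|
          / ‖(g : EuclideanSpace ℝ (Fin n))‖ := by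
  have hS' : ∀ z, z ∈ S ↔ z - e ∈ Tᗮ ∧ Nd (z - e) ≤ 1 := fun z ↦ by
    rw [hS, Set.mem_ofPred_eq, ← Submodule.starProjection_apply]
    exact T.starProjection_eq_and_iff_sub_mem_orthogonal_and (p := fun w ↦ Nd w ≤ 1) heT
  have : Nonempty S := hSne.to_subtype
  refine le_ciInf fun ⟨g, hg⟩ ↦ ?_
  obtain ⟨hwT, hNdw⟩ := (hS' g).mp hg
  have hew : ⟪e, g - e⟫ = 0 := T.inner_right_of_mem_orthogonal heT hwT
  obtain ⟨t, ht, hcorr⟩ := exists_abs_inner_add_smul_div_norm_le hv.le hew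
  have hmem : e + t • (g - e) ∈ S := (hS' _).mpr <| by
    simpa only [add_sub_cancel_left] using
      ⟨Tᗮ.smul_mem t hwT, apply_smul_le_one_of_abs_le_one hNd_smul hNdw ht⟩
  have hrhs : ⟪‖e‖⁻¹ • e, g⟫ = ‖e‖ := by
    simpa only [add_sub_cancel] using inner_norm_inv_smul_add_of_inner_eq_zero hew
  rw [add_sub_cancel] at hcorr
  have hbdd : BddBelow (Set.range fun g : S ↦
      |⟪v, (g : EuclideanSpace ℝ (Fin n))⟫| / ‖(g : EuclideanSpace ℝ (Fin n))‖) :=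
    ⟨0, by rintro _ ⟨_, rfl⟩; positivity⟩
  calc ⨅ g : S, |⟪v, (g : EuclideanSpace ℝ (Fin n))⟫| / ‖(g : EuclideanSpace ℝ (Fin n))‖
      ≤ |⟪v, e + t • (g - e)⟫| / ‖e + t • (g - e)‖ :=
        ciInf_le hbdd ⟨_, hmem⟩
    _ ≤ ‖e‖ / ‖g‖ := hcorr
    _ = |⟪‖e‖⁻¹ • e, g⟫| / ‖g‖ := by rw [hrhs, abs_of_nonneg (norm_nonneg e)]

/-- For a norm decomposable at `x₀` with support subspace `T` and sign
vector `e ∈ T` (so that the subdifferential is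
`S = {z : P_T z = e, ‖P_{T⊥} z‖* ≤ 1}`), the normalized sign vector `e/‖e‖` maximizes the
minimum absolute correlation with the subdifferential: for every unit vector `v`,
`inf_{g ∈ S} |⟨v, g⟩|/‖g‖ ≤ inf_{g ∈ S} |⟨e/‖e‖, g⟩|/‖g‖`. -/
theorem sign_vector_maximizes_correlation {n : ℕ}
    (T : Submodule ℝ (EuclideanSpace ℝ (Fin n)))
    (Nd : EuclideanSpace ℝ (Fin n) → ℝ)
    (hNd_add : ∀ x y, Nd (x + y) ≤ Nd x + Nd y)
    (hNd_smul : ∀ (a : ℝ) (x : EuclideanSpace ℝ (Fin n)), Nd (a • x) = |a| * Nd x)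
    (hNd_pos : ∀ x, x ≠ 0 → 0 < Nd x)
    (e : EuclideanSpace ℝ (Fin n)) (heT : e ∈ T) (he0 : e ≠ 0)
    (S : Set (EuclideanSpace ℝ (Fin n)))
    (hS : S = {z | (T.orthogonalProjection z : EuclideanSpace ℝ (Fin n)) = e ∧
      Nd (z - (T.orthogonalProjection z : EuclideanSpace ℝ (Fin n))) ≤ 1})
    (hSne : S.Nonempty) (hS0 : (0 : EuclideanSpace ℝ (Fin n)) ∉ S)
    (v : EuclideanSpace ℝ (Fin n)) (hv : ‖v‖ = 1) :
    (⨅ g : S, |⟪v, (g : EuclideanSpace ℝ (Fin n))⟫| / ‖(g : EuclideanSpace ℝ (Fin n))‖)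
      ≤ ⨅ g : S, |⟪‖e‖⁻¹ • e, (g : EuclideanSpace ℝ (Fin n))⟫|
          / ‖(g : EuclideanSpace ℝ (Fin n))‖ :=
  sign_vector_maximizes_correlation_general T Nd hNd_smul e heT S hS hSne v hv
end

section
/- Let k₂ ≥ k₁ ≥ r ≥ 1, suppose k₂ is an integer power of 2 and r divides k₁, and let H ∈ ℝ^{k₂×k₂} be a Hadamard matrix (±1 entries, orthogonal rows). Define X ∈ ℝ^{k₁×k₂} whose i-th row equals the (((i−1) mod r)+1)-th row of H. Then the normalized matrix X̄ = X/‖X‖_F satisfies ‖X̄‖₁² = k₁k₂, ‖X̄‖_★² = r, ‖X̄‖_{1,2}² = k₂, and ‖X̄ᵀ‖_{1,2}² = k₁. -/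
/-!
Every entry of `X` is `±1`, which gives `‖X‖₁`, `‖X‖_F` and all row and column norms at once.
For the nuclear norm: the rows of `H` are orthogonal of squared length `k₂` and each of the first
`r` rows of `H` occurs `k₁ / r` times in `X`, so `X Xᵀ X = c X` with `c = (k₁ / r) k₂`. Hence
`A = XᵀX` satisfies `A² = c A`, its eigenvalues lie in `{0, c}`, and
`∑ √λ = ∑ λ / √c = tr A / √c = ‖X‖_F² / √c`, so `(‖X‖_★ / ‖X‖_F)² = ‖X‖_F² / c = r`.
-/

open Matrix Finset

theorem Fin.card_filter_mod_eq {k r a : ℕ} (hdvd : r ∣ k) (ha : a < r) :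
    #{i : Fin k | (i : ℕ) % r = a} = k / r := by
  have hcount := Nat.count_modEq_card k (a.zero_le.trans_lt ha) a
  rw [Nat.mod_eq_zero_of_dvd hdvd, if_neg (Nat.not_lt_zero _), add_zero,
    Nat.count_eq_card_filter_range] at hcount
  rw [← hcount, ← card_map Fin.valEmbedding]
  congr 1
  ext x
  simp only [mem_map, mem_filter, mem_univ, true_and, Fin.valEmbedding_apply, mem_range,
    Nat.ModEq, Nat.mod_eq_of_lt ha]
  constructor
  · rintro ⟨i, hi, rfl⟩
    exact ⟨i.2, hi⟩
  · rintro ⟨hx, hmod⟩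
    exact ⟨⟨x, hx⟩, hmod, rfl⟩

theorem Real.sum_sqrt_eq_sum_div_sqrt {ι : Type*} (s : Finset ι) (f : ι → ℝ) {c : ℝ}
    (hf : ∀ i ∈ s, f i = 0 ∨ f i = c) :
    ∑ i ∈ s, √(f i) = (∑ i ∈ s, f i) / √c := by
  rw [sum_div]
  refine sum_congr rfl fun i hi => ?_
  rcases hf i hi with h | h <;> rw [h]
  · simp
  · exact Real.div_sqrt.symm

theorem Matrix.submatrix_mul_transpose_mul_submatrix {R m n p : Type*} [CommSemiring R]
    [Fintype m] [Fintype p] [DecidableEq n] (H : Matrix n p R) {c : R} (hH : H * Hᵀ = c • 1)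
    (σ : m → n) {k : ℕ} (hσ : ∀ i, #{i' | σ i' = σ i} = k) :
    H.submatrix σ id * (H.submatrix σ id)ᵀ * H.submatrix σ id = (k * c) • H.submatrix σ id := by
  have gram : H.submatrix σ id * (H.submatrix σ id)ᵀ = (c • (1 : Matrix n n R)).submatrix σ σ := by
    rw [transpose_submatrix, ← submatrix_mul _ _ _ _ _ Function.bijective_id, hH]
  ext i j
  rw [gram, mul_apply, smul_apply]
  calc ∑ i', (c • (1 : Matrix n n R)).submatrix σ σ i i' * H.submatrix σ id i' j
      = ∑ i' with σ i' = σ i, c * H (σ i) j := by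
        rw [sum_filter]
        refine sum_congr rfl fun i' _ => ?_
        by_cases h : σ i' = σ i
        · simp [h]
        · simp [h, Ne.symm h]
    _ = (k * c) • H (σ i) j := by rw [sum_const, hσ, nsmul_eq_mul, smul_eq_mul, mul_assoc]

theorem Matrix.IsHermitian.eigenvalues_eq_zero_or_eq_of_mul_self_eq_smul
    {𝕜 n : Type*} [RCLike 𝕜] [Fintype n] [DecidableEq n] {A : Matrix n n 𝕜}
    (hA : A.IsHermitian) {c : ℝ} (h : A * A = c • A) (j : n) :
    hA.eigenvalues j = 0 ∨ hA.eigenvalues j = c := by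
  set v := ⇑(hA.eigenvectorBasis j)
  have hv : v ≠ 0 := fun h0 =>
    hA.eigenvectorBasis.orthonormal.ne_zero j ((WithLp.ofLp_eq_zero 2).mp h0)
  have hAv := hA.mulVec_eigenvectorBasis j
  have key : (hA.eigenvalues j * hA.eigenvalues j) • v = (c * hA.eigenvalues j) • v := by
    calc _ = A *ᵥ (A *ᵥ v) := by rw [hAv, mulVec_smul, hAv, smul_smul]
      _ = _ := by rw [mulVec_mulVec, h, smul_mulVec, hAv, smul_smul]
  have hquad : (hA.eigenvalues j - c) * hA.eigenvalues j = 0 := by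
    linear_combination smul_left_injective ℝ hv key
  rcases mul_eq_zero.mp hquad with hc | h0
  · exact .inr (sub_eq_zero.mp hc)
  · exact .inl h0

theorem Matrix.sum_sqrt_eigenvalues_conjTranspose_mul_self_of_mul_conjTranspose_mul_eq_smul
    {𝕜 m n : Type*} [RCLike 𝕜] [Fintype m] [Fintype n] [DecidableEq n] {X : Matrix m n 𝕜}
    {c : ℝ} (h : X * Xᴴ * X = c • X) :
    ∑ j, √((isHermitian_conjTranspose_mul_self X).eigenvalues j) =
      RCLike.re (Xᴴ * X).trace / √c := by
  have hA : Xᴴ * X * (Xᴴ * X) = c • (Xᴴ * X) := by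
    rw [Matrix.mul_assoc, ← Matrix.mul_assoc X, h, Matrix.mul_smul]
  rw [Real.sum_sqrt_eq_sum_div_sqrt _ _ fun j _ =>
      (isHermitian_conjTranspose_mul_self X).eigenvalues_eq_zero_or_eq_of_mul_self_eq_smul hA j,
    (isHermitian_conjTranspose_mul_self X).trace_eq_sum_eigenvalues]
  simp

theorem hadamard_sl_construction_general {r k₁ k₂ : ℕ}
    (hr : 1 ≤ r) (h1 : r ≤ k₁) (h2 : k₁ ≤ k₂)
    (hdvd : r ∣ k₁)
    (H : Matrix (Fin k₂) (Fin k₂) ℝ)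
    (hHpm : ∀ i j, H i j = 1 ∨ H i j = -1)
    (hHorth : H * Hᵀ = (k₂ : ℝ) • 1)
    (X : Matrix (Fin k₁) (Fin k₂) ℝ)
    (hX : ∀ (i : Fin k₁) (j : Fin k₂),
      X i j = H ⟨i.val % r, lt_of_lt_of_le (Nat.mod_lt _ hr) (h1.trans h2)⟩ j)
    (frob : ℝ) (hfrob : frob = Real.sqrt (∑ i, ∑ j, X i j ^ 2))
    (nuc : ℝ)
    (hnuc : nuc = ∑ j, Real.sqrt ((Matrix.isHermitian_conjTranspose_mul_self X).eigenvalues j)) :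
    ((∑ i, ∑ j, |X i j|) / frob) ^ 2 = (k₁ : ℝ) * k₂ ∧
    (nuc / frob) ^ 2 = (r : ℝ) ∧
    ((∑ j, Real.sqrt (∑ i, X i j ^ 2)) / frob) ^ 2 = (k₂ : ℝ) ∧
    ((∑ i, Real.sqrt (∑ j, X i j ^ 2)) / frob) ^ 2 = (k₁ : ℝ) := by
  have hk₁ : (0 : ℝ) < k₁ := by exact_mod_cast hr.trans h1
  have hk₂ : (0 : ℝ) < k₂ := by exact_mod_cast (hr.trans h1).trans h2
  let σ : Fin k₁ → Fin k₂ := fun i => ⟨i % r, (Nat.mod_lt _ hr).trans_le (h1.trans h2)⟩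
  have hXσ : X = H.submatrix σ id := Matrix.ext hX
  have hX_abs : ∀ i j, |X i j| = 1 := fun i j => by
    rcases hHpm (σ i) j with h | h <;> simp [hXσ, h]
  have hX_sq : ∀ i j, X i j ^ 2 = 1 := fun i j => by rw [← sq_abs, hX_abs, one_pow]
  have hfrob_sq : frob ^ 2 = k₁ * k₂ := by
    rw [hfrob, Real.sq_sqrt (by positivity)]
    simp [hX_sq]
  refine ⟨?_, ?_, ?_, ?_⟩
  · have hl1 : ∑ i, ∑ j, |X i j| = k₁ * k₂ := by simp [hX_abs]
    rw [hl1, div_pow, hfrob_sq]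
    field_simp
  · have hfiber : ∀ i, #{i' | σ i' = σ i} = k₁ / r := fun i => by
      simpa [σ, Fin.ext_iff] using Fin.card_filter_mod_eq hdvd (Nat.mod_lt i hr)
    have hgram : X * Xᴴ * X = ((k₁ / r : ℕ) * (k₂ : ℝ)) • X := by
      rw [conjTranspose_eq_transpose_of_trivial, hXσ]
      exact submatrix_mul_transpose_mul_submatrix H hHorth σ hfiber
    have htrace : (Xᴴ * X).trace = k₁ * k₂ := by
      simp [trace, mul_apply, ← sq, hX_sq, mul_comm]
    rw [hnuc, sum_sqrt_eigenvalues_conjTranspose_mul_self_of_mul_conjTranspose_mul_eq_smul hgram,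
      RCLike.re_to_real, htrace, Nat.cast_div hdvd (Nat.cast_pos.mpr hr).ne', div_pow, div_pow,
      Real.sq_sqrt (by positivity), hfrob_sq]
    field_simp
  · have hcols : ∑ j, √(∑ i, X i j ^ 2) = k₂ * √k₁ := by simp [hX_sq]
    rw [hcols, div_pow, mul_pow, Real.sq_sqrt hk₁.le, hfrob_sq]
    field_simp
  · have hrows : ∑ i, √(∑ j, X i j ^ 2) = k₁ * √k₂ := by simp [hX_sq]
    rw [hrows, div_pow, mul_pow, Real.sq_sqrt hk₂.le, hfrob_sq]
    field_simp

/-- Hadamard construction of a maximally spread S&L matrix. With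
`1 ≤ r ≤ k₁ ≤ k₂`, `r ∣ k₁`, `k₂` a power of two, `H` a `k₂ × k₂` Hadamard matrix and
`X` the `k₁ × k₂` matrix whose `i`-th row is the `((i mod r)+1)`-th row of `H`, the
normalization `X̄ = X/‖X‖_F` satisfies `‖X̄‖₁² = k₁k₂`, `‖X̄‖_★² = r`, `‖X̄‖_{1,2}² = k₂`
and `‖X̄ᵀ‖_{1,2}² = k₁` (nuclear norm = sum of singular values, i.e. of the square roots
of the eigenvalues of `XᴴX`). -/
theorem hadamard_sl_construction {r k₁ k₂ : ℕ}
    (hr : 1 ≤ r) (h1 : r ≤ k₁) (h2 : k₁ ≤ k₂)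
    (hdvd : r ∣ k₁) (hpow : ∃ t : ℕ, k₂ = 2 ^ t)
    (H : Matrix (Fin k₂) (Fin k₂) ℝ)
    (hHpm : ∀ i j, H i j = 1 ∨ H i j = -1)
    (hHorth : H * Hᵀ = (k₂ : ℝ) • 1)
    (X : Matrix (Fin k₁) (Fin k₂) ℝ)
    (hX : ∀ (i : Fin k₁) (j : Fin k₂),
      X i j = H ⟨i.val % r, lt_of_lt_of_le (Nat.mod_lt _ hr) (h1.trans h2)⟩ j)
    (frob : ℝ) (hfrob : frob = Real.sqrt (∑ i, ∑ j, X i j ^ 2))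
    (nuc : ℝ)
    (hnuc : nuc = ∑ j, Real.sqrt ((Matrix.isHermitian_conjTranspose_mul_self X).eigenvalues j)) :
    ((∑ i, ∑ j, |X i j|) / frob) ^ 2 = (k₁ : ℝ) * k₂ ∧
    (nuc / frob) ^ 2 = (r : ℝ) ∧
    ((∑ j, Real.sqrt (∑ i, X i j ^ 2)) / frob) ^ 2 = (k₂ : ℝ) ∧
    ((∑ i, Real.sqrt (∑ j, X i j ^ 2)) / frob) ^ 2 = (k₁ : ℝ) :=
  hadamard_sl_construction_general hr h1 h2 hdvd H hHpm hHorth X hX frob hfrob nuc hnuc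
end

section
/- Let x₀ ∈ ℝ^n, A ∈ ℝ^{m×n}, and norms ‖·‖_(i), i = 1,…,τ. If the program minimizing f_best(x) = max_i ‖x‖_(i)/‖x₀‖_(i) over {x ∈ C : Ax = Ax₀} fails to recover x₀ (i.e., some feasible x' ≠ x₀ has f_best(x') ≤ f_best(x₀) = 1), then for every function f(x) = h(‖x‖_(1),…,‖x‖_(τ)) with h convex, nondecreasing in each argument, the program minimizing f over the same feasible set also fails: f(x') ≤ f(x₀). -/
open Matrix
open scoped RealInnerProductSpace

/-- If the program minimizing `f_best(x) = maxᵢ ‖x‖_(i)/‖x₀‖_(i)` over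
`{x ∈ C : Ax = Ax₀}` fails to recover `x₀`, i.e. some feasible `x' ≠ x₀ ` satisfies
`f_best(x') ≤ f_best(x₀)`, then for every `f(x) = h(‖x‖_(1), …, ‖x‖_(τ))` with `h` convex
and nondecreasing in each argument, the program minimizing `f` also fails:
`f(x') ≤ f(x₀)`. -/
theorem best_function_failure_implies_all_fail {m n τ : ℕ} [NeZero τ]
    (N : Fin τ → EuclideanSpace ℝ (Fin n) → ℝ)
    (hNnonneg : ∀ i x, 0 ≤ N i x)
    (C : Set (EuclideanSpace ℝ (Fin n))) (hCconv : Convex ℝ C)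
    (hCcone : ∀ x ∈ C, ∀ t : ℝ, 0 ≤ t → t • x ∈ C)
    (A : Matrix (Fin m) (Fin n) ℝ)
    (x₀ : EuclideanSpace ℝ (Fin n)) (hx₀C : x₀ ∈ C)
    (hpos : ∀ i, 0 < N i x₀)
    (x' : EuclideanSpace ℝ (Fin n)) (hx'C : x' ∈ C) (hx'ne : x' ≠ x₀)
    (hfeas : Matrix.toEuclideanLin A x' = Matrix.toEuclideanLin A x₀)
    (hfail : (⨆ i, N i x' / N i x₀) ≤ ⨆ i, N i x₀ / N i x₀)
    (h : (Fin τ → ℝ) → ℝ)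
    (hconv : ConvexOn ℝ {v : Fin τ → ℝ | ∀ i, 0 ≤ v i} h)
    (hmono : ∀ u v : Fin τ → ℝ, (∀ i, 0 ≤ u i) → (∀ i, u i ≤ v i) → h u ≤ h v) :
    h (fun i => N i x') ≤ h (fun i => N i x₀) := by
  apply hmono _ _ (fun i => hNnonneg i x') 
  intro i
  have hr : (⨆ j, N j x₀ / N j x₀) = 1 := by
    have : ∀ j, N j x₀ / N j x₀ = 1 := fun j => div_self (hpos j).ne'
    simp [this]
  have hle : N i x' / N i x₀ ≤ 1 := by
    refine le_trans ?_ (hr ▸ hfail)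
    exact le_ciSup (f := fun j => N j x' / N j x₀) (Set.Finite.bddAbove (Set.finite_range _)) i
  exact (div_le_one (hpos i)).mp hle
end
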